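/- arXiv:1607.05420 — 6 statements merged into one kernel-verified Lean document; each statement's English description precedes it below -/
import Mathlib

section
/- Let f_1, ..., f_n be polynomials over a field F of characteristic zero that are linearly independent, let a ∈ F, and let f = f_1 + ... + f_n. Then the multiplicity of a as a root of f is at most n - 1 plus the multiplicity of a as a root of the Wronskian Wr(f_1, ..., f_n) (which is a nonzero polynomial). -/
/-! Replacing `fⱼ` by `fⱼ + c • fₖ` (`j ≠ k`) is a column operation on the Wronskian matrix, so it
changes neither the Wronskian `W` nor linear independence. Such operations cancel leading terms of
equal degree, which reduces `W ≠ 0` to polynomials of distinct degrees `dⱼ`; sorted increasingly,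
the coefficient of `W` in degree `∑ (dⱼ - j)` is a Vandermonde determinant in the `dⱼ` times the
leading coefficients, nonzero in characteristic zero.

Adding all columns to the first leaves `W` unchanged and makes that column `(f, f', …, f⁽ⁿ⁻¹⁾)`
with `f = ∑ fⱼ`. If `(X - a)ᵐ ∣ f` then `(X - a)ᵐ⁻ⁱ ∣ f⁽ⁱ⁾`, so expanding along this column gives
`(X - a)ᵐ⁻⁽ⁿ⁻¹⁾ ∣ W`. -/

open Polynomial

/-- The Wronskian determinant of a family of `n` polynomials: the determinant of the
`n × n` matrix whose `(i+1, j)` entry is the `i`-th derivative of `f j`. -/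
noncomputable def wronskian {F : Type*} [Field F] {n : ℕ} (f : Fin n → F[X]) : F[X] :=
  Matrix.det (Matrix.of fun i j : Fin n => derivative^[(i : ℕ)] (f j))

open Finset Matrix

theorem Fin.val_le_of_strictMono {n : ℕ} {d : Fin n → ℕ} (hd : StrictMono d) (j : Fin n) :
    (j : ℕ) ≤ d j :=
  calc (j : ℕ) = #(Iio j) := (Fin.card_Iio j).symm
    _ ≤ #(range (d j)) :=
      card_le_card_of_injOn d (fun i hi => by simpa using hd (mem_Iio.1 hi)) hd.injective.injOn
    _ = d j := card_range _

namespace Polynomial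

variable {R : Type*} [CommSemiring R]

theorem coeff_prod_sum_of_natDegree_le {ι : Type*} (s : Finset ι) (p : ι → R[X]) (e : ι → ℕ)
    (h : ∀ i ∈ s, (p i).natDegree ≤ e i) :
    (∏ i ∈ s, p i).coeff (∑ i ∈ s, e i) = ∏ i ∈ s, (p i).coeff (e i) := by
  induction s using Finset.cons_induction with
  | empty => simp
  | cons a s ha ih =>
    have hs : ∀ i ∈ s, (p i).natDegree ≤ e i := fun i hi => h i (mem_cons_of_mem hi)
    rw [prod_cons, sum_cons, coeff_mul_add_eq_of_natDegree_le (h a (mem_cons_self a s))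
      ((natDegree_prod_le _ _).trans (sum_le_sum hs)), ih hs, prod_cons]

theorem natDegree_sub_smul_lt {K : Type*} [Field K] {p q : K[X]} (h : p.natDegree = q.natDegree)
    (hq : q ≠ 0) (hr : p - (p.leadingCoeff / q.leadingCoeff) • q ≠ 0) :
    (p - (p.leadingCoeff / q.leadingCoeff) • q).natDegree < p.natDegree := by
  have hp : p ≠ 0 := by
    rintro rfl
    simp at hr
  have hlc : p.leadingCoeff / q.leadingCoeff ≠ 0 :=
    div_ne_zero (leadingCoeff_ne_zero.2 hp) (leadingCoeff_ne_zero.2 hq)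
  rw [smul_eq_C_mul] at hr ⊢
  refine natDegree_lt_natDegree hr (degree_sub_lt_left ?_ hp ?_)
  · rw [degree_C_mul hlc, degree_eq_natDegree hp, degree_eq_natDegree hq, h]
  · rw [leadingCoeff_mul, leadingCoeff_C, div_mul_cancel₀ _ (leadingCoeff_ne_zero.2 hq)]
end Polynomial

theorem Matrix.det_descFactorial_eq_det_vandermonde {R : Type*} [CommRing R] [IsDomain R]
    {n : ℕ} (d : Fin n → ℕ) :
    (of fun i j : Fin n => ((d j).descFactorial i : R)).det =
      (vandermonde fun j => (d j : R)).det := by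
  rw [det_eval_matrixOfPolynomials_eq_det_vandermonde _ (fun i => descPochhammer R i)
    (fun i => descPochhammer_natDegree R i) (fun i => monic_descPochhammer R i), ← det_transpose]
  simp [transpose, descPochhammer_eval_eq_descFactorial]

section Wronskian

variable {F : Type*} [Field F] {n : ℕ}

theorem wronskian_comp_perm (f : Fin n → F[X]) (σ : Equiv.Perm (Fin n)) :
    wronskian (f ∘ σ) = Equiv.Perm.sign σ • wronskian f := by
  rw [Units.smul_def, zsmul_eq_mul]
  exact det_permute' σ (of fun i j : Fin n => derivative^[(i : ℕ)] (f j))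

theorem wronskian_add_smul (f : Fin n → F[X]) (c : Fin n → F) {k : Fin n} (hc : c k = 0) :
    wronskian (f + (c · • f k)) = wronskian f := by
  set M := of fun i j : Fin n => derivative^[(i : ℕ)] (f j)
  have hM : (of fun i j : Fin n => derivative^[(i : ℕ)] ((f + (c · • f k)) j)) =
      M * (1 + replicateCol Unit (Pi.single k (1 : F[X])) *
        replicateRow Unit fun j => C (c j)) := by
    rw [Matrix.mul_add, Matrix.mul_one]
    ext i j : 1
    simp [M, Matrix.mul_apply, Pi.single_apply, iterate_map_add, smul_eq_C_mul,
      iterate_derivative_C_mul, mul_comm _ (C _)]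
  rw [_root_.wronskian, hM, det_mul, det_one_add_replicateCol_mul_replicateRow]
  simp [hc, _root_.wronskian, M]

theorem coeff_wronskian_eq_det (f : Fin n → F[X]) {d : Fin n → ℕ}
    (hdeg : ∀ j, (f j).natDegree ≤ d j) (hd : ∀ j : Fin n, (j : ℕ) ≤ d j) :
    (wronskian f).coeff (∑ j, (d j - j)) =
      (of fun i j : Fin n => ((d j).descFactorial i : F) * (f j).coeff (d j)).det := by
  rw [_root_.wronskian, det_apply, det_apply, finsetSum_coeff]
  refine sum_congr rfl fun σ _ => ?_
  rw [coeff_smul]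
  congr 1
  by_cases hσ : ∀ j, (σ j : ℕ) ≤ d j
  · have hsum : ∑ j, (d j - σ j) = ∑ j, (d j - j) := by
      rw [sum_tsub_distrib _ fun j _ => hσ j, sum_tsub_distrib _ fun j _ => hd j,
        Equiv.sum_comp σ fun j => (j : ℕ)]
    simp only [of_apply]
    rw [← hsum, coeff_prod_sum_of_natDegree_le _ _ _ fun j _ =>
      (natDegree_iterate_derivative _ _).trans (Nat.sub_le_sub_right (hdeg j) _)]
    refine prod_congr rfl fun j _ => ?_
    simp [coeff_iterate_derivative, Nat.sub_add_cancel (hσ j)]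
  · obtain ⟨j, hj⟩ := not_forall.1 hσ
    rw [prod_eq_zero (mem_univ j), prod_eq_zero (mem_univ j), coeff_zero]
    · simp [Nat.descFactorial_eq_zero_iff_lt.2 (not_le.1 hj)]
    · simp [iterate_derivative_eq_zero ((hdeg j).trans_lt (not_le.1 hj))]

theorem wronskian_ne_zero_of_strictMono [CharZero F] {f : Fin n → F[X]} (hf : ∀ j, f j ≠ 0)
    (hd : StrictMono fun j => (f j).natDegree) :
    wronskian f ≠ 0 := by
  have hcoeff := coeff_wronskian_eq_det f (fun j => le_rfl) (Fin.val_le_of_strictMono hd)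
  have hfactor : (of fun i j : Fin n =>
        ((f j).natDegree.descFactorial i : F) * (f j).coeff (f j).natDegree) =
      (of fun i j : Fin n => ((f j).natDegree.descFactorial i : F)) *
        diagonal fun j => (f j).leadingCoeff := by
    ext i j
    simp [mul_diagonal]
  have hvdm : (vandermonde fun j => ((f j).natDegree : F)).det ≠ 0 :=
    det_vandermonde_ne_zero_iff.2 (Nat.cast_injective.comp hd.injective)
  intro h
  rw [h, coeff_zero, hfactor, det_mul, det_diagonal, det_descFactorial_eq_det_vandermonde] at hcoeff
  exact mul_ne_zero hvdm (prod_ne_zero_iff.2 fun j _ => leadingCoeff_ne_zero.2 (hf j)) hcoeff.symm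

theorem wronskian_ne_zero_of_injective [CharZero F] {f : Fin n → F[X]} (hf : ∀ j, f j ≠ 0)
    (hd : Function.Injective fun j => (f j).natDegree) :
    wronskian f ≠ 0 := by
  set σ := Tuple.sort fun j => (f j).natDegree
  have hσ : StrictMono fun j => ((f ∘ σ) j).natDegree :=
    (Tuple.monotone_sort _).strictMono_of_injective (hd.comp σ.injective)
  have := wronskian_ne_zero_of_strictMono (f := f ∘ σ) (fun j => hf (σ j)) hσ
  rw [wronskian_comp_perm] at this
  exact fun h => this (by rw [h, smul_zero])

theorem LinearIndependent.wronskian_ne_zero [CharZero F] {f : Fin n → F[X]}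
    (hf : LinearIndependent F f) : wronskian f ≠ 0 := by
  induction h : ∑ j, (f j).natDegree using Nat.strong_induction_on generalizing f with
  | _ N ih =>
  by_cases hinj : Function.Injective fun j => (f j).natDegree
  · exact wronskian_ne_zero_of_injective hf.ne_zero hinj
  obtain ⟨j, k, hdeg, hjk⟩ := Function.not_injective_iff.1 hinj
  set c : Fin n → F := Pi.single j (-((f j).leadingCoeff / (f k).leadingCoeff))
  have hck : c k = 0 := Pi.single_eq_of_ne (Ne.symm hjk) _
  set g := f + (c · • f k)
  have hg : LinearIndependent F g := (linearIndependent_add_smul_iff hck).2 hf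
  have hgj : g j = f j - ((f j).leadingCoeff / (f k).leadingCoeff) • f k := by
    simp [g, c, sub_eq_add_neg]
  have hlt : (g j).natDegree < (f j).natDegree := by
    rw [hgj]
    exact natDegree_sub_smul_lt hdeg (hf.ne_zero k) (hgj ▸ hg.ne_zero j)
  have hsum : ∑ i, (g i).natDegree < N := h ▸ sum_lt_sum (fun i _ => by
    rcases eq_or_ne i j with rfl | hij
    · exact hlt.le
    · simp [g, c, Pi.single_eq_of_ne hij]) ⟨j, mem_univ j, hlt⟩
  rw [← wronskian_add_smul f c hck]
  exact ih _ hsum hg rfl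

theorem pow_sub_dvd_wronskian {n : ℕ} (f : Fin (n + 1) → F[X]) (q : F[X]) {m : ℕ}
    (h : q ^ m ∣ ∑ j, f j) : q ^ (m - n) ∣ wronskian f := by
  set M := of fun i j : Fin (n + 1) => derivative^[(i : ℕ)] (f j)
  have hcol : wronskian f = (M.updateCol 0 fun i => derivative^[(i : ℕ)] (∑ j, f j)).det := by
    simpa [M, iterate_derivative_sum, _root_.wronskian] using
      (det_updateCol_sum M 0 fun _ => 1).symm
  rw [hcol, det_succ_column_zero]
  refine dvd_sum fun i _ => ?_
  rw [updateCol_self]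
  exact (((pow_dvd_pow q (Nat.sub_le_sub_left (Fin.is_le i) m)).trans
    (pow_sub_dvd_iterate_derivative_of_pow_dvd _ h)).mul_left _).mul_right _

end Wronskian

theorem stmt0 {F : Type*} [Field F] [CharZero F] {n : ℕ} (f : Fin n → F[X])
    (hf : LinearIndependent F f) (a : F) :
    wronskian f ≠ 0 ∧
      (∑ i, f i).rootMultiplicity a ≤ n - 1 + (wronskian f).rootMultiplicity a := by
  have hW := hf.wronskian_ne_zero
  refine ⟨hW, ?_⟩
  cases n with
  | zero => simp
  | succ n =>
    have hdvd := pow_sub_dvd_wronskian f (X - C a) (pow_rootMultiplicity_dvd (∑ i, f i) a)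
    have := (le_rootMultiplicity_iff hW).2 hdvd
    omega
end

section
/- Let f_1, ..., f_n ∈ F[x] be linearly independent polynomials with f_j = Q_j^{d_j} · g_j where d_j ≥ n for all j. Then the polynomial Q = ∏_{j=1}^n Q_j^{d_j - n + 1} divides the Wronskian Wr(f_1, ..., f_n). -/
/-!
The `(i, j)` entry of the Wronskian matrix is the `i`-th derivative of `Q j ^ d j * g j` with
`i < n`, so every entry of column `j` is divisible by `Q j ^ (d j - n + 1)`; these column factors
come out of the determinant.
-/

open Polynomial

theorem Matrix.prod_dvd_det_of_forall_dvd {R n : Type*} [CommRing R] [Fintype n] [DecidableEq n]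
    (M : Matrix n n R) (c : n → R) (h : ∀ i j, c j ∣ M i j) : ∏ j, c j ∣ M.det := by
  choose B hB using h
  have hM : M = Matrix.of fun i j => c j * Matrix.of B i j := Matrix.ext hB
  rw [hM, Matrix.det_mul_row]
  exact dvd_mul_right _ _

theorem stmt1_general {F : Type*} [Field F] {n : ℕ} (f Q g : Fin n → F[X])
    (d : Fin n → ℕ)
    (hfact : ∀ j, f j = Q j ^ d j * g j) (hd : ∀ j, n ≤ d j) :
    (∏ j, Q j ^ (d j - n + 1)) ∣ wronskian f := by
  refine Matrix.prod_dvd_det_of_forall_dvd _ _ fun i j => ?_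
  have hexp : d j - n + 1 ≤ d j - i := by
    have := i.isLt
    have := hd j
    omega
  rw [Matrix.of_apply, hfact j]
  exact (pow_dvd_pow _ hexp).trans
    (pow_sub_dvd_iterate_derivative_of_pow_dvd _ (dvd_mul_right _ _))

theorem stmt1 {F : Type*} [Field F] [CharZero F] {n : ℕ} (f Q g : Fin n → F[X])
    (d : Fin n → ℕ) (hf : LinearIndependent F f)
    (hfact : ∀ j, f j = Q j ^ d j * g j) (hd : ∀ j, n ≤ d j) :
    (∏ j, Q j ^ (d j - n + 1)) ∣ wronskian f :=
  stmt1_general f Q g d hfact hd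
end

section
/- Let δ be a nonnegative integer and let f ∈ F[x] be written as f = ∑_{i=1}^t Q_i(x)·(x - a_i)^{e_i} where a_i ∈ F, e_i ∈ ℕ, and deg(Q_i) ≤ δ for all i. Then there exist polynomials P_0, ..., P_{2t-1} ∈ F[x], not all zero, with deg(P_k) ≤ k + δ for each k, such that ∑_{k=0}^{2t-1} P_k(x)·g^{(k)}(x) = 0 holds simultaneously for g = f and for each g = Q_i(x)·(x - a_i)^{e_i}. -/
/-!
Count dimensions. The coefficient vectors `(P₀, …, P_{2t-1})` with `deg P_k ≤ k + δ` form a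
space of dimension `∑_{k < 2t} (k + δ + 1) = t (2δ + 2t + 1)`. For `g = Q (X - a)^e` with
`deg Q ≤ δ`, every `∑ P_k g^{(k)}` is divisible by `(X - a)^(e - (2t - 1))` and has degree at
most `(e - (2t - 1)) + 2δ + 2t - 1`, so these values fill a space of dimension at most
`2δ + 2t`. The `t` linear maps `P ↦ ∑ P_k g_i^{(k)}` therefore have a common nonzero kernel
vector, and by linearity it also annihilates `f = ∑ g_i`.
-/
open Polynomial Module

theorem LinearMap.exists_ne_zero_forall_eq_zero_of_sum_finrank_range_lt {K V M ι : Type*}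
    [DivisionRing K] [AddCommGroup V] [Module K V] [FiniteDimensional K V]
    [AddCommGroup M] [Module K M] [Fintype ι] (Ψ : ι → V →ₗ[K] M)
    (h : ∑ i, finrank K (LinearMap.range (Ψ i)) < finrank K V) :
    ∃ v ≠ 0, ∀ i, Ψ i v = 0 := by
  let Φ : V →ₗ[K] ∀ i, LinearMap.range (Ψ i) := LinearMap.pi fun i => (Ψ i).rangeRestrict
  have hΦ : LinearMap.ker Φ ≠ ⊥ :=
    LinearMap.ker_ne_bot_of_finrank_lt (by rwa [finrank_pi_fintype])
  obtain ⟨v, hv, hv0⟩ := (Submodule.ne_bot_iff _).1 hΦ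
  refine ⟨v, hv0, fun i => ?_⟩
  simpa [Φ] using congrArg Subtype.val (congrFun (LinearMap.mem_ker.1 hv) i)

theorem Finset.sum_range_two_mul_add_succ (t δ : ℕ) :
    ∑ k ∈ Finset.range (2 * t), (k + δ + 1) = t * (2 * δ + 2 * t + 1) := by
  induction t with
  | zero => simp
  | succ t ih =>
    rw [show 2 * (t + 1) = 2 * t + 1 + 1 by ring, Finset.sum_range_succ, Finset.sum_range_succ, ih]
    ring

namespace Polynomial

section CommRing

variable {R : Type*} [CommRing R]

theorem mem_degreeLT_succ_iff_natDegree_le {p : R[X]} {d : ℕ} :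
    p ∈ degreeLT R (d + 1) ↔ p.natDegree ≤ d := by
  rw [degreeLT_succ_eq_degreeLE, mem_degreeLE, natDegree_le_iff_degree_le]

theorem pow_sub_dvd_mul_iterate_derivative (P q : R[X]) (a : R) {e k r : ℕ} (hk : k ≤ r) :
    (X - C a) ^ (e - r) ∣ P * derivative^[k] (q * (X - C a) ^ e) :=
  dvd_mul_of_dvd_right ((pow_dvd_pow _ (by omega)).trans
    (pow_sub_dvd_iterate_derivative_of_pow_dvd k (dvd_mul_left _ q))) P

theorem natDegree_mul_iterate_derivative_le {P q : R[X]} (a : R) {δ e k r : ℕ} (hk : k ≤ r)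
    (hP : P.natDegree ≤ k + δ) (hq : q.natDegree ≤ δ) :
    (P * derivative^[k] (q * (X - C a) ^ e)).natDegree ≤ e - r + (2 * δ + r) := by
  have hg : (q * (X - C a) ^ e).natDegree ≤ δ + e :=
    natDegree_mul_le.trans <| add_le_add hq <|
      (natDegree_pow_le_of_le e (natDegree_X_sub_C_le a)).trans_eq (mul_one e)
  have hD := (natDegree_iterate_derivative _ k).trans (Nat.sub_le_sub_right hg k)
  have := natDegree_mul_le (p := P) (q := derivative^[k] (q * (X - C a) ^ e))
  omega

end CommRing

variable {F : Type*} [Field F]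

theorem finrank_degreeLT (n : ℕ) : finrank F (degreeLT F n) = n := by
  rw [finrank_eq_card_basis (degreeLT.basis F n), Fintype.card_fin]

theorem mem_map_mulLeft_degreeLT_of_dvd {p f : F[X]} {d : ℕ} (hdvd : p ∣ f)
    (hf : f.natDegree ≤ p.natDegree + d) :
    f ∈ (degreeLT F (d + 1)).map (LinearMap.mulLeft F p) := by
  obtain ⟨h, rfl⟩ := hdvd
  rcases eq_or_ne p 0 with rfl | hp
  · simp
  rcases eq_or_ne h 0 with rfl | hh
  · simp
  rw [natDegree_mul hp hh] at hf
  exact ⟨h, mem_degreeLT_succ_iff_natDegree_le.2 (by omega), rfl⟩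

theorem sum_mul_iterate_derivative_mem {n δ e : ℕ} {q : F[X]} (a : F) (hq : q.natDegree ≤ δ)
    (P : Fin n → F[X]) (hP : ∀ k, (P k).natDegree ≤ k + δ) :
    ∑ k, P k * derivative^[k] (q * (X - C a) ^ e) ∈
      (degreeLT F (2 * δ + (n - 1) + 1)).map
        (LinearMap.mulLeft F ((X - C a) ^ (e - (n - 1)))) := by
  have hk : ∀ k : Fin n, (k : ℕ) ≤ n - 1 := fun k => by omega
  refine mem_map_mulLeft_degreeLT_of_dvd
    (Finset.dvd_sum fun k _ => pow_sub_dvd_mul_iterate_derivative _ _ a (hk k)) ?_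
  rw [natDegree_pow, natDegree_X_sub_C, mul_one]
  exact natDegree_sum_le_of_forall_le _ _ fun k _ =>
    natDegree_mul_iterate_derivative_le a (hk k) (hP k) hq

noncomputable def applyShiftedDiffOp (n δ : ℕ) (g : F[X]) :
    ((k : Fin n) → degreeLT F ((k : ℕ) + δ + 1)) →ₗ[F] F[X] :=
  ∑ k : Fin n, LinearMap.mulRight F (derivative^[k] g) ∘ₗ (degreeLT F _).subtype ∘ₗ
    LinearMap.proj (R := F) (φ := fun k : Fin n => degreeLT F ((k : ℕ) + δ + 1)) k

theorem applyShiftedDiffOp_apply (n δ : ℕ) (g : F[X])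
    (P : (k : Fin n) → degreeLT F ((k : ℕ) + δ + 1)) :
    applyShiftedDiffOp n δ g P = ∑ k, (P k : F[X]) * derivative^[k] g := by
  simp [applyShiftedDiffOp]

theorem finrank_shiftedDiffOp_coeffs (n δ : ℕ) :
    finrank F ((k : Fin n) → degreeLT F ((k : ℕ) + δ + 1)) =
      ∑ k ∈ Finset.range n, (k + δ + 1) := by
  rw [finrank_pi_fintype, ← Fin.sum_univ_eq_sum_range]
  simp only [finrank_degreeLT]

theorem finrank_range_applyShiftedDiffOp_le (n δ e : ℕ) {q : F[X]} (a : F)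
    (hq : q.natDegree ≤ δ) :
    finrank F (LinearMap.range (applyShiftedDiffOp n δ (q * (X - C a) ^ e))) ≤
      2 * δ + (n - 1) + 1 := by
  have hrange : LinearMap.range (applyShiftedDiffOp n δ (q * (X - C a) ^ e)) ≤
      (degreeLT F (2 * δ + (n - 1) + 1)).map
        (LinearMap.mulLeft F ((X - C a) ^ (e - (n - 1)))) := by
    rintro _ ⟨P, rfl⟩
    rw [applyShiftedDiffOp_apply]
    exact sum_mul_iterate_derivative_mem a hq _ fun k =>
      mem_degreeLT_succ_iff_natDegree_le.1 (P k).2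
  calc _ ≤ _ := Submodule.finrank_mono hrange
    _ ≤ _ := Submodule.finrank_map_le _ _
    _ = _ := finrank_degreeLT _

end Polynomial

theorem stmt3_general {F : Type*} [Field F] {t : ℕ} (δ : ℕ) (ht : 0 < t)
    (Q : Fin t → F[X]) (a : Fin t → F) (e : Fin t → ℕ)
    (hQ : ∀ i, (Q i).natDegree ≤ δ) (f : F[X])
    (hf : f = ∑ i, Q i * (X - C (a i)) ^ e i) :
    ∃ P : Fin (2 * t) → F[X], P ≠ 0 ∧ (∀ k, (P k).natDegree ≤ (k : ℕ) + δ) ∧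
      (∑ k, P k * derivative^[(k : ℕ)] f = 0) ∧
      (∀ i, ∑ k, P k * derivative^[(k : ℕ)] (Q i * (X - C (a i)) ^ e i) = 0) := by
  have hdim : ∑ i, finrank F (LinearMap.range
      (applyShiftedDiffOp (2 * t) δ (Q i * (X - C (a i)) ^ e i))) <
      finrank F ((k : Fin (2 * t)) → degreeLT F ((k : ℕ) + δ + 1)) := calc
    _ ≤ ∑ _i : Fin t, (2 * δ + (2 * t - 1) + 1) := Finset.sum_le_sum fun i _ =>
      finrank_range_applyShiftedDiffOp_le _ _ _ _ (hQ i)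
    _ < t * (2 * δ + 2 * t + 1) := by
      rw [Finset.sum_const, Finset.card_univ, Fintype.card_fin, smul_eq_mul]
      exact Nat.mul_lt_mul_of_pos_left (by omega) ht
    _ = _ := by rw [finrank_shiftedDiffOp_coeffs, Finset.sum_range_two_mul_add_succ]
  obtain ⟨P, hP0, hPg⟩ :=
    LinearMap.exists_ne_zero_forall_eq_zero_of_sum_finrank_range_lt _ hdim
  simp only [applyShiftedDiffOp_apply] at hPg
  refine ⟨fun k => P k, fun h => hP0 (funext fun k => Subtype.ext (congrFun h k)),
    fun k => mem_degreeLT_succ_iff_natDegree_le.1 (P k).2, ?_, hPg⟩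
  rw [hf]
  simp only [iterate_derivative_sum, Finset.mul_sum]
  rw [Finset.sum_comm]
  exact Finset.sum_eq_zero fun i _ => hPg i

theorem stmt3 {F : Type*} [Field F] [CharZero F] {t : ℕ} (δ : ℕ) (ht : 0 < t)
    (Q : Fin t → F[X]) (a : Fin t → F) (e : Fin t → ℕ)
    (hQ : ∀ i, (Q i).natDegree ≤ δ) (f : F[X])
    (hf : f = ∑ i, Q i * (X - C (a i)) ^ e i) :
    ∃ P : Fin (2 * t) → F[X], P ≠ 0 ∧ (∀ k, (P k).natDegree ≤ (k : ℕ) + δ) ∧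
      (∑ k, P k * derivative^[(k : ℕ)] f = 0) ∧
      (∀ i, ∑ k, P k * derivative^[(k : ℕ)] (Q i * (X - C (a i)) ^ e i) = 0) :=
  stmt3_general δ ht Q a e hQ f hf
end

section
/- Let f ∈ F[x] have degree d. Either f = α(x - a)^d for some α, a ∈ F, or Waring_F(f) · Sparsest_F(f) ≥ d + 1. -/
/-!
Shift so that the sparsest representation of `f` is centred at `0`: `g(x) = f(x + c)` then has
at most `Sparsest(f)` monomials and is a sum of `s = Waring(f)` powers `α_i (x + b_i)^d`, so the
coefficient of `x^(d-m)` in `g` is `binom(d, m) q(m)` with `q(m) = ∑ α_i b_i^m`. By Lagrange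
interpolation through the nonzero `b_i`, if `q` vanishes at `s` consecutive `m ≥ 1` it vanishes
at every `m ≥ 1`, and then `g` is a monomial `γ x^d`. Otherwise every `s` consecutive exponents
below `d` meet the support of `g`, so `g` has at least `⌊d/s⌋ + 1` terms, and
`s (⌊d/s⌋ + 1) > d`.
-/

open Polynomial

/-- The Waring rank of a univariate polynomial `f` of degree `d`: the least `s` such that
`f = ∑_{i=1}^s α_i (x - a_i)^d`. -/
noncomputable def waringRank {F : Type*} [Field F] (f : F[X]) : ℕ :=
  sInf {s | ∃ α a : Fin s → F, f = ∑ i, C (α i) * (X - C (a i)) ^ f.natDegree}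

/-- The sparsest shift complexity of `f`: the least `s` such that
`f = ∑_{i=1}^s α_i (x - a)^{e_i}` for a single shift `a`. -/
noncomputable def sparsestShift {F : Type*} [Field F] (f : F[X]) : ℕ :=
  sInf {s | ∃ (α : Fin s → F) (c : F) (e : Fin s → ℕ), f = ∑ i, C (α i) * (X - C c) ^ e i}

open Finset

theorem Finset.div_add_one_le_card_of_forall_exists_mem_Ico {S : Finset ℕ} {d n : ℕ}
    (hd : d ∈ S) (hS : ∀ a, a + n ≤ d → ∃ k ∈ S, k ∈ Ico a (a + n)) : d / n + 1 ≤ #S := by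
  have hsurj : Set.SurjOn (· / n) (S.erase d) (range (d / n)) := by
    intro u hu
    have hn : 0 < n := Nat.pos_of_ne_zero fun h => by simp [h] at hu
    have hun : (u + 1) * n ≤ d := (Nat.le_div_iff_mul_le hn).1 (mem_range.1 hu)
    obtain ⟨k, hkS, hk⟩ := hS (u * n) (by linarith)
    rw [mem_Ico] at hk
    exact ⟨k, mem_erase.2 ⟨by linarith, hkS⟩, Nat.div_eq_of_lt_le hk.1 (by linarith)⟩
  have hcard := card_le_card_of_surjOn _ hsurj
  rw [card_range, card_erase_of_mem hd] at hcard
  have := card_pos.2 ⟨d, hd⟩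
  omega

theorem Polynomial.card_support_sum_C_mul_X_pow_le {R : Type*} [Semiring R] {t : ℕ}
    (β : Fin t → R) (e : Fin t → ℕ) : #(∑ j, C (β j) * X ^ e j).support ≤ t := by
  classical
  have hsupp : (∑ j, C (β j) * X ^ e j).support ⊆ univ.image e := by
    intro k hk
    rw [mem_support_iff, finsetSum_coeff] at hk
    obtain ⟨j, -, hj⟩ := exists_ne_zero_of_sum_ne_zero hk
    rw [coeff_C_mul_X_pow] at hj
    exact mem_image.2 ⟨j, mem_univ j, (ite_ne_right_iff.1 hj).1.symm⟩
  exact (card_le_card hsupp).trans (card_image_le.trans_eq (card_fin t))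

theorem Polynomial.coeff_sum_C_mul_X_add_C_pow {R ι : Type*} [CommSemiring R] [Fintype ι]
    (α b : ι → R) (d k : ℕ) :
    (∑ i, C (α i) * (X + C (b i)) ^ d).coeff k = d.choose k * ∑ i, α i * b i ^ (d - k) := by
  simp only [finsetSum_coeff, coeff_C_mul, coeff_X_add_C_pow, mul_sum]
  exact sum_congr rfl fun i _ => by ring

section

variable {F : Type*} [Field F]

theorem Finset.sum_mul_pow_eq_zero_of_forall_lt_card {ι : Type*} [Fintype ι]
    (α b : ι → F) {m₀ m : ℕ} (hm₀ : m₀ ≠ 0) (hm : m ≠ 0)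
    (h : ∀ j < Fintype.card ι, ∑ i, α i * b i ^ (m₀ + j) = 0) :
    ∑ i, α i * b i ^ m = 0 := by
  classical
  set B := (univ.image b).erase 0
  -- `p` interpolates `β ↦ β ^ (m - m₀)` at the nonzero values of `b`, so that
  -- `b i ^ m = b i ^ m₀ * p (b i)` and the sum is a combination of the window sums.
  set p := Lagrange.interpolate B id (fun β => β ^ ((m : ℤ) - m₀))
  have hinj : Set.InjOn id (B : Set F) := Set.injOn_id _
  rcases isEmpty_or_nonempty ι with hι | hι
  · simp
  have hp : p.natDegree < Fintype.card ι := by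
    by_cases hp0 : p = 0
    · simp [hp0, Fintype.card_pos]
    have hB : #B ≤ Fintype.card ι := (card_erase_le.trans card_image_le).trans_eq card_univ
    exact (natDegree_lt_iff_degree_lt hp0).2
      ((Lagrange.degree_interpolate_lt _ hinj).trans_le (by exact_mod_cast hB))
  have hpow : ∀ i, b i ^ m = b i ^ m₀ * p.eval (b i) := by
    intro i
    by_cases hb : b i = 0
    · simp [hb, hm, hm₀]
    · have hbB : b i ∈ B := mem_erase.2 ⟨hb, mem_image_of_mem _ (mem_univ _)⟩
      rw [show p.eval (b i) = b i ^ ((m : ℤ) - m₀) from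
        Lagrange.eval_interpolate_at_node _ hinj hbB, ← zpow_natCast, ← zpow_natCast,
        ← zpow_add₀ hb, add_sub_cancel]
  calc ∑ i, α i * b i ^ m
      = ∑ i, ∑ j ∈ range (Fintype.card ι), p.coeff j * (α i * b i ^ (m₀ + j)) := by
        refine sum_congr rfl fun i _ => ?_
        rw [hpow, eval_eq_sum_range' hp, mul_sum, mul_sum]
        refine sum_congr rfl fun j _ => ?_
        ring
    _ = 0 := by
        rw [sum_comm]
        exact sum_eq_zero fun j hj => by rw [← mul_sum, h j (mem_range.1 hj), mul_zero]

open Matrix in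
theorem Polynomial.exists_eq_sum_C_mul_X_sub_C_pow [CharZero F] {f : F[X]} {d : ℕ} (hf : f.natDegree ≤ d) :
    ∃ α a : Fin (d + 1) → F, f = ∑ i, C (α i) * (X - C (a i)) ^ d := by
  set x : Fin (d + 1) → F := fun i => (i : ℕ)
  have hx : Function.Injective x := Nat.cast_injective.comp Fin.val_injective
  have hV : IsUnit (vandermonde x) := by
    rw [isUnit_iff_isUnit_det, isUnit_iff_ne_zero]
    exact det_vandermonde_ne_zero_iff.2 hx
  obtain ⟨α, hα⟩ := vecMul_surjective_iff_isUnit.2 hV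
    (fun m => f.coeff (d - m) / d.choose m)
  refine ⟨α, fun i => -x i, ?_⟩
  simp only [map_neg, sub_neg_eq_add]
  ext k
  rw [coeff_sum_C_mul_X_add_C_pow]
  rcases le_or_gt k d with hk | hk
  · have hαk := congrFun hα ⟨d - k, by omega⟩
    simp only [vecMul, dotProduct, vandermonde_apply] at hαk
    have hchoose : (d.choose k : F) ≠ 0 := Nat.cast_ne_zero.2 (Nat.choose_pos hk).ne'
    rw [hαk, Nat.sub_sub_self hk, Nat.choose_symm hk, mul_div_cancel₀ _ hchoose]
  · rw [coeff_eq_zero_of_natDegree_lt (hf.trans_lt hk), Nat.choose_eq_zero_of_lt hk,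
      Nat.cast_zero, zero_mul]

theorem Polynomial.exists_mem_support_Ico_of_forall_ne_C_mul_X_pow [CharZero F]
    {ι : Type*} [Fintype ι] (α b : ι → F) {d a : ℕ}
    (hmono : ∀ γ, ∑ i, C (α i) * (X + C (b i)) ^ d ≠ C γ * X ^ d)
    (ha : a + Fintype.card ι ≤ d) :
    ∃ k ∈ (∑ i, C (α i) * (X + C (b i)) ^ d).support, k ∈ Ico a (a + Fintype.card ι) := by
  set n := Fintype.card ι
  by_contra! hgap
  have hchoose : ∀ k ≤ d, (d.choose k : F) ≠ 0 := fun k hk =>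
    Nat.cast_ne_zero.2 (Nat.choose_pos hk).ne'
  have hwindow : ∀ j < n, ∑ i, α i * b i ^ (d + 1 - a - n + j) = 0 := by
    intro j hj
    have hk : a + n - 1 - j ∉ (∑ i, C (α i) * (X + C (b i)) ^ d).support :=
      fun hk => hgap _ hk (mem_Ico.2 ⟨by omega, by omega⟩)
    rw [notMem_support_iff, coeff_sum_C_mul_X_add_C_pow,
      show d - (a + n - 1 - j) = d + 1 - a - n + j by omega] at hk
    exact (mul_eq_zero.1 hk).resolve_left (hchoose _ (by omega))
  refine hmono ((∑ i, C (α i) * (X + C (b i)) ^ d).coeff d) (ext fun k => ?_)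
  rw [coeff_C_mul_X_pow]
  split_ifs with hkd
  · rw [hkd]
  rw [coeff_sum_C_mul_X_add_C_pow]
  rcases lt_or_gt_of_ne hkd with hk | hk
  · rw [sum_mul_pow_eq_zero_of_forall_lt_card α b (by omega) (by omega) hwindow, mul_zero]
  · rw [Nat.choose_eq_zero_of_lt hk, Nat.cast_zero, zero_mul]

theorem Polynomial.add_one_le_card_mul_card_support [CharZero F] {ι : Type*} [Fintype ι]
    (α b : ι → F) {d : ℕ} (hdeg : (∑ i, C (α i) * (X + C (b i)) ^ d).natDegree = d)
    (hmono : ∀ γ, ∑ i, C (α i) * (X + C (b i)) ^ d ≠ C γ * X ^ d) :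
    d + 1 ≤ Fintype.card ι * #(∑ i, C (α i) * (X + C (b i)) ^ d).support := by
  have hne : ∑ i, C (α i) * (X + C (b i)) ^ d ≠ 0 := by simpa using hmono 0
  have hι : 0 < Fintype.card ι := Fintype.card_pos_iff.2 <| by
    by_contra hempty
    simp [not_nonempty_iff.1 hempty] at hne
  have hd := natDegree_mem_support_of_nonzero hne
  rw [hdeg] at hd
  calc d + 1 ≤ Fintype.card ι * (d / Fintype.card ι + 1) := Nat.lt_mul_div_succ d hι
    _ ≤ _ := Nat.mul_le_mul_left _ <| div_add_one_le_card_of_forall_exists_mem_Ico hd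
        fun _ ha => exists_mem_support_Ico_of_forall_ne_C_mul_X_pow α b hmono ha

theorem exists_eq_sum_waringRank [CharZero F] (f : F[X]) :
    ∃ α a : Fin (waringRank f) → F, f = ∑ i, C (α i) * (X - C (a i)) ^ f.natDegree :=
  Nat.sInf_mem (s := {s | ∃ α a : Fin s → F, f = ∑ i, C (α i) * (X - C (a i)) ^ f.natDegree})
    ⟨_, exists_eq_sum_C_mul_X_sub_C_pow le_rfl⟩

theorem exists_eq_sum_sparsestShift (f : F[X]) :
    ∃ (α : Fin (sparsestShift f) → F) (c : F) (e : Fin (sparsestShift f) → ℕ),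
      f = ∑ i, C (α i) * (X - C c) ^ e i := by
  refine Nat.sInf_mem (s := {s | ∃ (α : Fin s → F) (c : F) (e : Fin s → ℕ),
    f = ∑ i, C (α i) * (X - C c) ^ e i}) ⟨f.natDegree + 1, fun i => f.coeff i, 0, fun i => i, ?_⟩
  rw [C_0, sub_zero, Fin.sum_univ_eq_sum_range (fun i => C (f.coeff i) * X ^ i)]
  exact as_sum_range_C_mul_X_pow f

end

theorem stmt10 {F : Type*} [Field F] [CharZero F] (f : F[X]) (d : ℕ)
    (hd : f.natDegree = d) :
    (∃ α c : F, f = C α * (X - C c) ^ d) ∨ d + 1 ≤ waringRank f * sparsestShift f := by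
  obtain ⟨α, a, hfα⟩ := exists_eq_sum_waringRank f
  obtain ⟨β, c, e, hfβ⟩ := exists_eq_sum_sparsestShift f
  set g := f.comp (X + C c) with hg
  have hgα : g = ∑ i, C (α i) * (X + C (c - a i)) ^ d := by
    conv_lhs => rw [hg, hfα, hd]
    simp only [Polynomial.sum_comp, mul_comp, pow_comp, sub_comp, C_comp, X_comp]
    refine sum_congr rfl fun i _ => ?_
    rw [map_sub]
    ring
  have hgβ : g = ∑ j, C (β j) * X ^ e j := by
    conv_lhs => rw [hg, hfβ]
    simp [Polynomial.sum_comp]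
  by_cases hmono : ∃ γ, g = C γ * X ^ d
  · obtain ⟨γ, hγ⟩ := hmono
    refine Or.inl ⟨γ, c, ?_⟩
    have h := congrArg (·.comp (X - C c)) hγ
    simp only [hg, comp_assoc, add_comp, X_comp, C_comp, sub_add_cancel, comp_X, mul_comp,
      pow_comp] at h
    exact h
  push Not at hmono
  have hdeg : g.natDegree = d := by simp [hg, natDegree_comp, hd]
  rw [hgα] at hmono hdeg
  right
  calc d + 1 ≤ waringRank f * #g.support := by
        simpa [hgα] using add_one_le_card_mul_card_support _ _ hdeg hmono
    _ ≤ waringRank f * sparsestShift f :=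
        Nat.mul_le_mul_left _ (hgβ ▸ card_support_sum_C_mul_X_pow_le β e)
end

section
/- For every d ∈ ℕ, the polynomial f_d := ∑_{j ≡ 3 (mod 4), 0 ≤ j ≤ d} 4·C(d,j)·x^{d-j} ∈ ℝ[x] satisfies f_d = (x+1)^d − (x−1)^d + i(x+i)^d − i(x−i)^d when regarded over ℂ; in particular AffPow_ℂ(f_d) ≤ 4. -/
/-!
Writing `ζ` for the fourth roots of unity `1, -1, i, -i`, the right-hand side is
`∑ ζ, ζ (x + ζ)^d`. Its coefficient of `x^(d-j)` is `C(d,j) ∑ ζ, ζ^(j+1)`, and the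
roots-of-unity filter makes `∑ ζ, ζ^(j+1)` equal to `4` when `j ≡ 3 (mod 4)` and `0`
otherwise. The four summands `ζ (x + ζ)^d` then witness `AffPow_ℂ(f_d) ≤ 4`.
-/

open Polynomial

/-- `affPowRank f` is the least `s` such that `f = ∑_{i=1}^s α_i (x - a_i)^{e_i}`. -/
noncomputable def affPowRank {F : Type*} [Field F] (f : F[X]) : ℕ :=
  sInf {s | ∃ (α a : Fin s → F) (e : Fin s → ℕ), f = ∑ i, C (α i) * (X - C (a i)) ^ e i}

theorem affPowRank_le_of_eq_sum {F : Type*} [Field F] {f : F[X]} {s : ℕ} (α a : Fin s → F)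
    (e : Fin s → ℕ) (hf : f = ∑ i, C (α i) * (X - C (a i)) ^ e i) : affPowRank f ≤ s :=
  Nat.sInf_le ⟨α, a, e, hf⟩

theorem X_add_C_pow_eq_sum {R : Type*} [CommSemiring R] (a : R) (d : ℕ) :
    (X + C a) ^ d = ∑ j ∈ Finset.range (d + 1), C (a ^ j * d.choose j) * X ^ (d - j) := by
  rw [add_pow, ← Finset.sum_range_reflect]
  refine Finset.sum_congr rfl fun j hj => ?_
  have hjd : j ≤ d := Nat.lt_succ_iff.mp (Finset.mem_range.mp hj)
  rw [Nat.add_sub_cancel, Nat.sub_sub_self hjd, Nat.choose_symm hjd, C_mul, C_pow, C_eq_natCast]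
  ring

open Complex in
theorem sum_fourth_roots_of_unity_pow_succ (j : ℕ) :
    (1 : ℂ) ^ (j + 1) + (-1) ^ (j + 1) + I ^ (j + 1) + (-I) ^ (j + 1) =
      if j % 4 = 3 then 4 else 0 := by
  have hI : I ^ 4 = 1 := I_pow_four
  have hnegI : (-I) ^ 4 = 1 := by rw [neg_pow, hI]; norm_num
  rw [pow_eq_pow_mod (j + 1) hnegI, pow_eq_pow_mod (j + 1) hI,
    pow_eq_pow_mod (j + 1) (show (-1 : ℂ) ^ 4 = 1 by norm_num), one_pow, Nat.add_mod]
  have hj : j % 4 < 4 := Nat.mod_lt j (by norm_num)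
  interval_cases j % 4 <;> norm_num [pow_succ]

open Complex in
theorem sum_filter_mod_four_choose_eq (d : ℕ) :
    (∑ j ∈ (Finset.range (d + 1)).filter fun j => j % 4 = 3,
        C ((4 : ℂ) * d.choose j) * X ^ (d - j)) =
      (X + 1) ^ d - (X - 1) ^ d + C I * (X + C I) ^ d - C I * (X - C I) ^ d := by
  have expand (ζ : ℂ) : C ζ * (X + C ζ) ^ d =
      ∑ j ∈ Finset.range (d + 1), C (ζ ^ (j + 1) * d.choose j) * X ^ (d - j) := by
    rw [X_add_C_pow_eq_sum, Finset.mul_sum]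
    refine Finset.sum_congr rfl fun j _ => ?_
    rw [pow_succ, C_mul, C_mul, C_mul]
    ring
  symm
  calc (X + 1) ^ d - (X - 1) ^ d + C I * (X + C I) ^ d - C I * (X - C I) ^ d
      = C 1 * (X + C 1) ^ d + C (-1) * (X + C (-1)) ^ d + C I * (X + C I) ^ d
          + C (-I) * (X + C (-I)) ^ d := by
        simp only [map_one, map_neg]
        ring
    _ = ∑ j ∈ Finset.range (d + 1), C ((1 ^ (j + 1) + (-1) ^ (j + 1) + I ^ (j + 1)
          + (-I) ^ (j + 1)) * d.choose j) * X ^ (d - j) := by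
        simp only [expand, ← Finset.sum_add_distrib, add_mul, C_add, add_mul]
    _ = _ := by
        rw [Finset.sum_filter]
        refine Finset.sum_congr rfl fun j _ => ?_
        rw [sum_fourth_roots_of_unity_pow_succ]
        split_ifs <;> simp

theorem stmt13 (d : ℕ) :
    (∑ j ∈ (Finset.range (d + 1)).filter fun j => j % 4 = 3,
        C ((4 : ℂ) * d.choose j) * X ^ (d - j)) =
      (X + 1) ^ d - (X - 1) ^ d + C Complex.I * (X + C Complex.I) ^ d
        - C Complex.I * (X - C Complex.I) ^ d ∧
    affPowRank (∑ j ∈ (Finset.range (d + 1)).filter fun j => j % 4 = 3,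
        C ((4 : ℂ) * d.choose j) * X ^ (d - j)) ≤ 4 := by
  refine ⟨sum_filter_mod_four_choose_eq d, ?_⟩
  refine affPowRank_le_of_eq_sum ![1, -1, Complex.I, -Complex.I]
    ![-1, 1, -Complex.I, Complex.I] (fun _ => d) ?_
  rw [sum_filter_mod_four_choose_eq, Fin.sum_univ_four]
  simp only [Matrix.cons_val_zero, Matrix.cons_val_one, Matrix.cons_val_two,
    Matrix.cons_val_three, Matrix.head_cons, Matrix.tail_cons, map_neg, map_one]
  ring
end

section
/- Let f = ∑_{i=1}^s α_i (x − a_i)^d ∈ F[x] with distinct a_i ∈ F and d ≥ s. Then f satisfies an SDE of order s and shift 0 which is also satisfied by each (x − a_i)^d; moreover its leading coefficient polynomial R_s equals (∏_{i=1}^s d·(d−1)···(d−i+1)) · ∏_{i=1}^s (x − a_i) · ∏_{i<j} (a_i − a_j), up to the stated factorization, and deg(R_i) = i for each 0 ≤ i ≤ s. -/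
/-!
Let `e_i` be the `i`-th elementary symmetric polynomial of the linear forms `X - a_k`. Since
`D^i (X - b)^d = d(d-1)⋯(d-i+1) (X - b)^(d-i)`, the operator `∑_i (-1)^i e_i / (d(d-1)⋯(d-i+1)) D^i`
sends `(X - b)^d` to `(X - b)^(d-s) ∑_i (-1)^i e_i (X - b)^(s-i) = (X - b)^(d-s) ∏_k (a_k - b)`
(Vieta), which vanishes for `b = a_j`, hence on every linear combination of the `(X - a_j)^d`.
After scaling, its top coefficient is the stated multiple of `e_s = ∏_k (X - a_k)`, and `e_i` has
degree exactly `i` since it is a sum of `binom(s, i)` monic polynomials of degree `i`.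
-/

open Polynomial Finset

theorem Multiset.prod_map_sub_eq_sum_esymm {R : Type*} [CommRing R] (m : Multiset R) (t : R) :
    (m.map (t - ·)).prod =
      ∑ j ∈ Finset.range (Multiset.card m + 1), (-1) ^ j * m.esymm j * t ^ (Multiset.card m - j) := by
  simpa [eval_multiset_prod, eval_finsetSum, mul_assoc] using
    congrArg (eval t) m.prod_X_sub_X_eq_sum_esymm

theorem Multiset.esymm_card {R : Type*} [CommSemiring R] (m : Multiset R) :
    m.esymm (Multiset.card m) = m.prod := by
  simp [Multiset.esymm, Multiset.powersetCard_self]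

theorem Polynomial.sum_mul_iterate_derivative_sum_C_mul {R ι κ : Type*} [CommSemiring R]
    (s : Finset ι) (t : Finset κ) (P : ι → R[X]) (n : ι → ℕ) (α : κ → R) (g : κ → R[X]) :
    ∑ i ∈ s, P i * derivative^[n i] (∑ j ∈ t, C (α j) * g j) =
      ∑ j ∈ t, C (α j) * ∑ i ∈ s, P i * derivative^[n i] (g j) := by
  simp only [iterate_derivative_sum, iterate_derivative_C_mul, mul_sum]
  rw [sum_comm]
  exact sum_congr rfl fun j _ => sum_congr rfl fun i _ => by ring

theorem Nat.cast_descFactorial_ne_zero {F : Type*} [Semiring F] [CharZero F] {d i : ℕ}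
    (h : i ≤ d) : (d.descFactorial i : F) ≠ 0 :=
  Nat.cast_ne_zero.2 (Nat.descFactorial_eq_zero_iff_lt.not.2 (by omega))

section

variable {F : Type*} [Field F] {s : ℕ} (a : Fin s → F)

noncomputable def linearFactors : Multiset F[X] := univ.val.map fun k => X - C (a k)

theorem card_linearFactors : Multiset.card (linearFactors a) = s := by
  simp [linearFactors]

theorem esymm_linearFactors (i : ℕ) :
    (linearFactors a).esymm i = ∑ A ∈ powersetCard i univ, ∏ k ∈ A, (X - C (a k)) :=
  Finset.esymm_map_val _ _ _

theorem natDegree_esymm_linearFactors [CharZero F] {i : ℕ} (hi : i ≤ s) :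
    ((linearFactors a).esymm i).natDegree = i := by
  have hmonic : ∀ A ∈ powersetCard i (univ : Finset (Fin s)), (∏ k ∈ A, (X - C (a k))).Monic :=
    fun A _ => monic_prod_of_monic _ _ fun k _ => monic_X_sub_C (a k)
  have hdeg : ∀ A ∈ powersetCard i (univ : Finset (Fin s)),
      (∏ k ∈ A, (X - C (a k))).natDegree = i := fun A hA => by
    rw [natDegree_prod_of_monic _ _ fun k _ => monic_X_sub_C (a k)]
    simp [(mem_powersetCard.1 hA).2]
  rw [esymm_linearFactors]
  refine le_antisymm (natDegree_sum_le_of_forall_le _ _ fun A hA => (hdeg A hA).le)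
    (le_natDegree_of_ne_zero ?_)
  have hcoeff : ∀ A ∈ powersetCard i (univ : Finset (Fin s)), (∏ k ∈ A, (X - C (a k))).coeff i = 1 :=
    fun A hA => by simpa [hdeg A hA] using (hmonic A hA).coeff_natDegree
  rw [finsetSum_coeff, sum_congr rfl hcoeff, sum_const, card_powersetCard, card_univ,
    Fintype.card_fin, nsmul_one]
  exact Nat.cast_ne_zero.2 (Nat.choose_pos hi).ne'

noncomputable def sdeCoeff (d i : ℕ) : F[X] :=
  C ((-1 : F) ^ (s + i) * d.descFactorial s / d.descFactorial i) * (linearFactors a).esymm i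

variable {a} [CharZero F] {d : ℕ}

theorem sdeCoeff_self (hsd : s ≤ d) : sdeCoeff a d s = ∏ k, (X - C (a k)) := by
  have := (linearFactors a).esymm_card
  rw [card_linearFactors] at this
  rw [sdeCoeff, this, Even.neg_one_pow ⟨s, rfl⟩, one_mul,
    div_self (Nat.cast_descFactorial_ne_zero hsd), C_1, one_mul]
  rfl

theorem natDegree_sdeCoeff (hsd : s ≤ d) {i : ℕ} (hi : i ≤ s) : (sdeCoeff a d i).natDegree = i := by
  rw [sdeCoeff, natDegree_C_mul, natDegree_esymm_linearFactors a hi]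
  exact div_ne_zero (mul_ne_zero (pow_ne_zero _ (by norm_num))
    (Nat.cast_descFactorial_ne_zero hsd)) (Nat.cast_descFactorial_ne_zero (hi.trans hsd))

theorem sdeCoeff_mul_iterate_derivative_X_sub_C_pow (hsd : s ≤ d) {i : ℕ} (hi : i ≤ s) (b : F) :
    sdeCoeff a d i * derivative^[i] ((X - C b) ^ d) =
      C ((-1 : F) ^ s * d.descFactorial s) * (X - C b) ^ (d - s) *
        ((-1) ^ i * (linearFactors a).esymm i * (X - C b) ^ (s - i)) := by
  have hc : C ((-1 : F) ^ (s + i) * d.descFactorial s / d.descFactorial i) *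
      C (d.descFactorial i : F) = C ((-1 : F) ^ s * d.descFactorial s) * (-1) ^ i := by
    rw [← C_mul, div_mul_cancel₀ _ (Nat.cast_descFactorial_ne_zero (hi.trans hsd)), pow_add]
    simp only [map_mul, map_pow, map_neg, map_one]
    ring
  rw [iterate_derivative_X_sub_pow, nsmul_eq_mul, ← C_eq_natCast, sdeCoeff,
    show d - i = (d - s) + (s - i) by omega, pow_add (X - C b)]
  linear_combination (linearFactors a).esymm i * (X - C b) ^ (d - s) * (X - C b) ^ (s - i) * hc

theorem sum_sdeCoeff_mul_iterate_derivative_X_sub_C_pow (hsd : s ≤ d) (j : Fin s) :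
    ∑ i : Fin (s + 1), sdeCoeff a d i * derivative^[i] ((X - C (a j)) ^ d) = 0 := by
  have hvanish : ((linearFactors a).map (X - C (a j) - ·)).prod = 0 :=
    Multiset.prod_eq_zero (Multiset.mem_map.2 ⟨_, by simp [linearFactors], sub_self _⟩)
  rw [Multiset.prod_map_sub_eq_sum_esymm, card_linearFactors] at hvanish
  rw [Fin.sum_univ_eq_sum_range (fun i => sdeCoeff a d i * derivative^[i] ((X - C (a j)) ^ d)),
    sum_congr rfl fun i hi => sdeCoeff_mul_iterate_derivative_X_sub_C_pow hsd
      (Nat.lt_succ_iff.1 (mem_range.1 hi)) _, ← mul_sum, hvanish, mul_zero]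

end

theorem stmt18 {F : Type*} [Field F] [CharZero F] {s d : ℕ} (hds : s ≤ d)
    (α : Fin s → F) (a : Fin s → F) (ha : Function.Injective a)
    (f : F[X]) (hf : f = ∑ i, C (α i) * (X - C (a i)) ^ d) :
    ∃ R : Fin (s + 1) → F[X],
      R ≠ 0 ∧
      (∀ i : Fin (s + 1), (R i).natDegree = (i : ℕ)) ∧
      (∑ i, R i * derivative^[(i : ℕ)] f = 0) ∧
      (∀ j : Fin s, ∑ i, R i * derivative^[(i : ℕ)] ((X - C (a j)) ^ d) = 0) ∧
      R (Fin.last s) =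
        C ((∏ i ∈ Finset.range s, (d.descFactorial (i + 1) : F)) *
            ∏ p ∈ Finset.univ.filter (fun p : Fin s × Fin s => p.1 < p.2),
              (a p.1 - a p.2)) *
          ∏ j, (X - C (a j)) := by
  set K : F := (∏ i ∈ Finset.range s, (d.descFactorial (i + 1) : F)) *
    ∏ p ∈ Finset.univ.filter (fun p : Fin s × Fin s => p.1 < p.2), (a p.1 - a p.2)
  have hK : K ≠ 0 := by
    refine mul_ne_zero (prod_ne_zero_iff.2 fun i hi => Nat.cast_descFactorial_ne_zero ?_)
      (prod_ne_zero_iff.2 fun p hp => sub_ne_zero.2 fun h => (mem_filter.1 hp).2.ne (ha h))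
    have := mem_range.1 hi
    omega
  have hkill (j : Fin s) : ∑ i : Fin (s + 1), C K * sdeCoeff a d i *
      derivative^[i] ((X - C (a j)) ^ d) = 0 := by
    simp only [mul_assoc, ← mul_sum, sum_sdeCoeff_mul_iterate_derivative_X_sub_C_pow hds, mul_zero]
  have hlast : C K * sdeCoeff a d (Fin.last s) = C K * ∏ j, (X - C (a j)) := by
    rw [Fin.val_last, sdeCoeff_self hds]
  refine ⟨fun i => C K * sdeCoeff a d i, fun h => ?_, fun i => ?_, ?_, hkill, hlast⟩
  · have := congrFun h (Fin.last s)
    simp only [hlast, Pi.zero_apply, mul_eq_zero, C_eq_zero, hK, false_or] at this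
    exact (monic_prod_of_monic _ _ fun k _ => monic_X_sub_C (a k)).ne_zero this
  · rw [natDegree_C_mul hK, natDegree_sdeCoeff hds i.is_le]
  · simp only [hf, sum_mul_iterate_derivative_sum_C_mul, hkill, mul_zero, sum_const_zero]
end
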